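/- arXiv:2007.14935 — 2 statements merged into one kernel-verified Lean document; each statement's English description precedes it below -/
import Mathlib

section
/- For μ₁ ∈ ℝ and μ ∈ ℝⁿ, σ_k^∞(μ₁, μ) = Σ_{j=0}^{k} (μ₁^j / j!) σ_{k-j}(μ), where σ_r denotes the classical r-th elementary symmetric polynomial; in particular σ_k^∞(0, μ) = σ_k(μ). -/
/-!
The recurrence says exactly that the generating series `S = ∑ σ_k^∞ X^k` solves the linear
differential equation `S' = S · (μ₀ + ∑ⱼ μⱼ / (1 + μⱼ X))` with `S(0) = 1`. The series
`exp(μ₀ X) · ∏ⱼ (1 + μⱼ X)` solves the same equation, since its logarithmic derivative is the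
sum of those of its factors. Over a torsion-free ring such an equation determines all coefficients
from the constant one, so the two series agree; reading off the coefficient of `X^k` gives the
formula, the `X^j` coefficient of `∏ⱼ (1 + μⱼ X)` being `σ_j(μ)`.
-/

/-- The `k`-th elementary symmetric polynomial of `μ : Fin n → ℝ`. -/
noncomputable def esymm {n : ℕ} (k : ℕ) (μ : Fin n → ℝ) : ℝ :=
  ∑ s ∈ Finset.powersetCard k (Finset.univ : Finset (Fin n)), ∏ i ∈ s, μ i

/-- The weighted elementary symmetric functions defined recursively:
`σ₀^∞ = 1` and for `k ≥ 1`,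
`k σ_k^∞(μ₀,μ) = σ_{k-1}^∞(μ₀,μ)(μ₀ + ∑ⱼ μⱼ) + ∑_{i=1}^{k-1} ∑_{j=1}^n (-1)^i σ_{k-1-i}^∞(μ₀,μ) μⱼ^{i+1}`. -/
noncomputable def esymmInfRec {n : ℕ} (μ0 : ℝ) (μ : Fin n → ℝ) : ℕ → ℝ
  | 0 => 1
  | (K + 1) =>
      (esymmInfRec μ0 μ K * (μ0 + ∑ j, μ j) +
        ∑ i ∈ Finset.range K, ∑ j, (-1 : ℝ) ^ (i + 1) * esymmInfRec μ0 μ (K - 1 - i) * μ j ^ (i + 2))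
        / (K + 1)
  termination_by k => k
  decreasing_by all_goals omega

open Finset PowerSeries

namespace Derivation

theorem map_prod_eq_prod_mul_sum {R A ι : Type*} [CommSemiring R] [CommSemiring A] [Algebra R A]
    (D : Derivation R A A) (s : Finset ι) {f g : ι → A} (h : ∀ i ∈ s, D (f i) = f i * g i) :
    D (∏ i ∈ s, f i) = (∏ i ∈ s, f i) * ∑ i ∈ s, g i := by
  classical
  induction s using Finset.induction_on with
  | empty => simp
  | insert i s hi ih =>
    rw [prod_insert hi, sum_insert hi, leibniz, smul_eq_mul, smul_eq_mul,
      ih fun j hj => h j (mem_insert_of_mem hj), h i (mem_insert_self i s)]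
    ring

end Derivation

namespace PowerSeries

variable {R : Type*}

theorem derivative_rescale [CommSemiring R] (a : R) (f : R⟦X⟧) :
    d⁄dX R (rescale a f) = C a * rescale a (d⁄dX R f) := by
  ext n
  simp only [coeff_derivative, coeff_rescale, coeff_C_mul, pow_succ]
  ring

theorem eq_of_derivative_eq_mul [CommRing R] [IsAddTorsionFree R] {f g h : R⟦X⟧}
    (hf : d⁄dX R f = f * h) (hg : d⁄dX R g = g * h) (h0 : constantCoeff f = constantCoeff g) :
    f = g := by
  ext n
  induction n using Nat.strong_induction_on with
  | _ n ih =>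
  cases n with
  | zero => simpa using h0
  | succ n =>
    have hmul : coeff n (f * h) = coeff n (g * h) := by
      simp only [coeff_mul]
      refine sum_congr rfl fun p hp => ?_
      rw [ih p.1 (by have := mem_antidiagonal.mp hp; omega)]
    have hsucc : coeff (n + 1) f * (n + 1) = coeff (n + 1) g * (n + 1) := by
      rw [← coeff_derivative, hf, hmul, ← hg, coeff_derivative]
    exact nsmul_right_injective n.succ_ne_zero (by simpa [nsmul_eq_mul, mul_comm] using hsucc)

theorem coeff_prod_one_add_C_mul_X [CommSemiring R] {ι : Type*} (s : Finset ι) (r : ι → R)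
    (k : ℕ) : coeff k (∏ i ∈ s, (1 + C (r i) * X)) = ∑ t ∈ s.powersetCard k, ∏ i ∈ t, r i := by
  classical
  simp only [prod_one_add, prod_mul_distrib, prod_const, ← map_prod, map_sum, coeff_C_mul_X_pow,
    powersetCard_eq_filter, sum_filter, eq_comm]

def logDerivOneAddCMulX [CommRing R] (a : R) : R⟦X⟧ := mk fun m => (-1) ^ m * a ^ (m + 1)

theorem derivative_one_add_C_mul_X [CommRing R] (a : R) :
    d⁄dX R (1 + C a * X) = (1 + C a * X) * logDerivOneAddCMulX a := by
  ext m
  cases m with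
  | zero => simp [logDerivOneAddCMulX, add_mul]
  | succ m =>
    simp [logDerivOneAddCMulX, add_mul, mul_assoc, coeff_succ_X_mul]
    ring

end PowerSeries

noncomputable def esymmInfLogDeriv {n : ℕ} (μ0 : ℝ) (μ : Fin n → ℝ) : ℝ⟦X⟧ :=
  C μ0 + ∑ j, logDerivOneAddCMulX (μ j)

theorem coeff_esymmInfLogDeriv {n : ℕ} (μ0 : ℝ) (μ : Fin n → ℝ) (m : ℕ) :
    coeff m (esymmInfLogDeriv μ0 μ) = (if m = 0 then μ0 else 0) + ∑ j, (-1) ^ m * μ j ^ (m + 1) := by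
  simp [esymmInfLogDeriv, logDerivOneAddCMulX, coeff_C]

theorem esymmInfRec_succ {n : ℕ} (μ0 : ℝ) (μ : Fin n → ℝ) (k : ℕ) :
    esymmInfRec μ0 μ (k + 1) * (k + 1) = μ0 * esymmInfRec μ0 μ k +
      ∑ m ∈ range (k + 1), esymmInfRec μ0 μ (k - m) * ∑ j, (-1) ^ m * μ j ^ (m + 1) := by
  rw [esymmInfRec, div_mul_cancel₀ _ (by positivity), sum_range_succ']
  have hterm : ∀ i ∈ range k, ∑ j, (-1) ^ (i + 1) * esymmInfRec μ0 μ (k - 1 - i) * μ j ^ (i + 2) =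
      esymmInfRec μ0 μ (k - (i + 1)) * ∑ j, (-1) ^ (i + 1) * μ j ^ (i + 1 + 1) := fun i _ => by
    rw [Nat.sub_sub, add_comm 1, mul_sum]
    exact sum_congr rfl fun _ _ => by ring
  simp only [sum_congr rfl hterm, Nat.sub_zero, pow_zero, one_mul, zero_add, pow_one]
  ring

theorem derivative_mk_esymmInfRec {n : ℕ} (μ0 : ℝ) (μ : Fin n → ℝ) :
    d⁄dX ℝ (mk (esymmInfRec μ0 μ)) = mk (esymmInfRec μ0 μ) * esymmInfLogDeriv μ0 μ := by
  ext k
  rw [coeff_derivative, coeff_mk, esymmInfRec_succ, mul_comm (mk (esymmInfRec μ0 μ)), coeff_mul,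
    Nat.sum_antidiagonal_eq_sum_range_succ fun a b => coeff a (esymmInfLogDeriv μ0 μ) * coeff b _]
  simp [coeff_esymmInfLogDeriv, mul_add, sum_add_distrib, mul_comm]

theorem derivative_exp_mul_prod {n : ℕ} (μ0 : ℝ) (μ : Fin n → ℝ) :
    d⁄dX ℝ (rescale μ0 (exp ℝ) * ∏ j, (1 + C (μ j) * X)) =
      rescale μ0 (exp ℝ) * (∏ j, (1 + C (μ j) * X)) * esymmInfLogDeriv μ0 μ := by
  rw [Derivation.leibniz, derivative_rescale, derivative_exp,
    (d⁄dX ℝ).map_prod_eq_prod_mul_sum _ fun j _ => derivative_one_add_C_mul_X (μ j),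
    esymmInfLogDeriv, smul_eq_mul, smul_eq_mul]
  ring

theorem mk_esymmInfRec {n : ℕ} (μ0 : ℝ) (μ : Fin n → ℝ) :
    mk (esymmInfRec μ0 μ) = rescale μ0 (exp ℝ) * ∏ j, (1 + C (μ j) * X) :=
  eq_of_derivative_eq_mul (derivative_mk_esymmInfRec μ0 μ) (derivative_exp_mul_prod μ0 μ)
    (by
      rw [map_mul, ← coeff_zero_eq_constantCoeff_apply (rescale μ0 _), coeff_rescale]
      simp [esymmInfRec])

/-- `σ_k^∞(μ₁, μ) = ∑_{j=0}^k (μ₁^j / j!) σ_{k-j}(μ)`; in particular `σ_k^∞(0, μ) = σ_k(μ)`. -/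
theorem esymmInfRec_eq_sum {n : ℕ} (k : ℕ) (μ1 : ℝ) (μ : Fin n → ℝ) :
    esymmInfRec μ1 μ k =
      ∑ j ∈ Finset.range (k + 1), μ1 ^ j / (Nat.factorial j) * esymm (k - j) μ ∧
    esymmInfRec (0 : ℝ) μ k = esymm k μ := by
  have hsum : ∀ μ0 : ℝ, esymmInfRec μ0 μ k =
      ∑ j ∈ Finset.range (k + 1), μ0 ^ j / (Nat.factorial j) * esymm (k - j) μ := by
    intro μ0
    rw [← coeff_mk k (esymmInfRec μ0 μ), mk_esymmInfRec, coeff_mul,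
      Nat.sum_antidiagonal_eq_sum_range_succ fun a b => coeff a (rescale μ0 (exp ℝ)) * coeff b _]
    simp [coeff_rescale, coeff_exp, coeff_prod_one_add_C_mul_X, esymm, div_eq_mul_inv]
  refine ⟨hsum μ1, ?_⟩
  rw [hsum, sum_range_succ']
  simp
end

section
/- Let n ≥ 2. The equation (n(1−r²) − 1)/(r√(1−r²)) = 1 + √(2n+3) has at least one root r with 0 < r < (n−1)/n. -/
/-- For `n ≥ 2`, the equation `(n(1−r²)−1)/(r√(1−r²)) = 1 + √(2n+3)` has at least one root
`r` with `0 < r < (n−1)/n`. -/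
theorem torus_equation_has_root (n : ℕ) (hn : 2 ≤ n) :
    ∃ r : ℝ, 0 < r ∧ r < ((n : ℝ) - 1) / n ∧
      ((n : ℝ) * (1 - r ^ 2) - 1) / (r * Real.sqrt (1 - r ^ 2)) =
        1 + Real.sqrt (2 * n + 3) := by
  set N : ℝ := (n : ℝ) with hNdef
  have hN : (2 : ℝ) ≤ N := by rw [hNdef]; exact_mod_cast hn
  have hNpos : (0 : ℝ) < N := by linarith
  set a : ℝ := 1 / (4 * N) with hadef
  set b : ℝ := (N - 1) / N with hbdef
  have hapos : 0 < a := by rw [hadef]; positivity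
  have hb1 : b < 1 := by
    rw [hbdef, div_lt_one hNpos]; linarith
  have hab : a < b := by
    rw [hadef, hbdef, div_lt_div_iff₀ (by positivity) hNpos]
    nlinarith
  set f : ℝ → ℝ := fun r => (N * (1 - r ^ 2) - 1) / (r * Real.sqrt (1 - r ^ 2)) with hfdef
  clear_value N a b f
  -- denominator positive on [a,b]
  have hden : ∀ r ∈ Set.Icc a b, 0 < r * Real.sqrt (1 - r ^ 2) := by
    intro r hr
    have hr0 : 0 < r := lt_of_lt_of_le hapos hr.1
    have hr1 : r < 1 := lt_of_le_of_lt hr.2 hb1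
    have h1 : 0 < 1 - r ^ 2 := by nlinarith
    exact mul_pos hr0 (Real.sqrt_pos.mpr h1)
  have hcont : ContinuousOn f (Set.Icc a b) := by
    rw [hfdef]
    apply ContinuousOn.div
    · fun_prop
    · fun_prop
    · intro r hr; exact ne_of_gt (hden r hr)
  -- value at b
  have h2N1 : (0:ℝ) ≤ 2 * N - 1 := by linarith
  set s : ℝ := Real.sqrt (2 * N - 1) with hsdef
  clear_value s
  have hspos : 0 < s := by
    rw [hsdef]; exact Real.sqrt_pos.mpr (by linarith)
  have hb2 : 1 - b ^ 2 = (2 * N - 1) / N ^ 2 := by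
    rw [hbdef]; field_simp; ring
  have hsqrtb : Real.sqrt (1 - b ^ 2) = s / N := by
    rw [hb2, hsdef, Real.sqrt_div h2N1, Real.sqrt_sq (le_of_lt hNpos)]
  have hNs : N ≤ Real.sqrt N * s := by
    have h1 : Real.sqrt N * s = Real.sqrt (N * (2 * N - 1)) := by
      rw [hsdef, ← Real.sqrt_mul (le_of_lt hNpos)]
    have h2 : Real.sqrt (N ^ 2) ≤ Real.sqrt (N * (2 * N - 1)) :=
      Real.sqrt_le_sqrt (by nlinarith)
    rw [Real.sqrt_sq (le_of_lt hNpos)] at h2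
    linarith [h1 ▸ h2]
  have hdenb : 0 < b * Real.sqrt (1 - b ^ 2) := hden b ⟨le_of_lt hab, le_refl b⟩
  have hfb_le : f b ≤ Real.sqrt N := by
    simp only [hfdef]
    rw [div_le_iff₀ hdenb, hsqrtb]
    have hNm1 : (0:ℝ) ≤ (N - 1) / N ^ 2 := div_nonneg (by linarith) (by positivity)
    have h := mul_le_mul_of_nonneg_right hNs hNm1
    have e0 : N * (1 - b ^ 2) - 1 = N * ((N - 1) / N ^ 2) := by
      rw [hb2]; field_simp; ring
    have e2 : Real.sqrt N * s * ((N - 1) / N ^ 2) = Real.sqrt N * (b * (s / N)) := by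
      rw [hbdef]; ring
    linarith [h, e0 ▸ le_refl (N * (1 - b ^ 2) - 1), e2 ▸ le_refl (Real.sqrt N * s * ((N - 1) / N ^ 2))]
  have hsqN_lt : Real.sqrt N < 1 + Real.sqrt (2 * N + 3) := by
    have h1 : Real.sqrt N ≤ Real.sqrt (2 * N + 3) := Real.sqrt_le_sqrt (by linarith)
    linarith
  have hfb_lt : f b < 1 + Real.sqrt (2 * N + 3) := lt_of_le_of_lt hfb_le hsqN_lt
  -- value at a
  have hsq23 : Real.sqrt (2 * N + 3) ≤ N + 2 := by
    have h1 : Real.sqrt (2 * N + 3) ≤ Real.sqrt ((N + 2) ^ 2) :=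
      Real.sqrt_le_sqrt (by nlinarith)
    rwa [Real.sqrt_sq (by linarith)] at h1
  have hfa : 1 + Real.sqrt (2 * N + 3) ≤ f a := by
    have hdena : 0 < a * Real.sqrt (1 - a ^ 2) :=
      hden a ⟨le_refl a, le_of_lt hab⟩
    have hsle : Real.sqrt (1 - a ^ 2) ≤ 1 :=
      Real.sqrt_le_one.mpr (by nlinarith)
    have ha4 : 4 * N * a = 1 := by
      rw [hadef]; field_simp
    have hkey : (N + 3) * (a * Real.sqrt (1 - a ^ 2)) ≤ N * (1 - a ^ 2) - 1 := by
      have hat : a * Real.sqrt (1 - a ^ 2) ≤ a :=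
        mul_le_of_le_one_right hapos.le hsle
      have h1 : (N + 3) * (a * Real.sqrt (1 - a ^ 2)) ≤ (N + 3) * a :=
        mul_le_mul_of_nonneg_left hat (by linarith)
      have h2 : (N + 3) * a ≤ N * (1 - a ^ 2) - 1 := by
        rw [hadef]
        have e1 : (N + 3) * (1 / (4 * N)) = (N + 3) / (4 * N) := by ring
        have e2 : N * (1 - (1 / (4 * N)) ^ 2) - 1 = (16 * N ^ 2 - 16 * N - 1) / (16 * N) := by
          field_simp; ring
        rw [e1, e2, div_le_div_iff₀ (by positivity) (by positivity)]
        nlinarith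
      linarith
    have hle : N + 3 ≤ f a := by
      simp only [hfdef]
      rw [le_div_iff₀ hdena]
      exact hkey
    linarith
  -- IVT
  have hmem : (1 + Real.sqrt (2 * N + 3)) ∈ Set.Icc (f b) (f a) :=
    ⟨le_of_lt hfb_lt, hfa⟩
  obtain ⟨r, hr, hfr⟩ := intermediate_value_Icc' (le_of_lt hab) hcont hmem
  simp only [hfdef] at hfr hfb_lt
  refine ⟨r, lt_of_lt_of_le hapos hr.1, ?_, hfr⟩
  rcases lt_or_eq_of_le hr.2 with h | h
  · exact h
  · exfalso
    rw [h] at hfr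
    linarith
end
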